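/- Let ρ_{ABC} be a quantum state and M an operator on the C system with M†M ≤ Id_C. Let ρ̂_{ABC} = (M ρ_{ABC} M†)/Tr(M ρ_{ABC} M†). Then H_min(A|B)_{ρ̂} ≥ H_min(A|B)_ρ − log(1/Tr(M ρ_{ABC} M†)). -/

import Mathlib

open Matrix Kronecker
open scoped Classical ComplexOrder

noncomputable section

abbrev Str (k : ℕ) := Fin k → Bool

def IsDensity {A : Type*} [Fintype A] (ρ : Matrix A A ℂ) : Prop :=
  ρ.PosSemidef ∧ ρ.trace = 1

def IsPure {A : Type*} (ρ : Matrix A A ℂ) : Prop :=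
  ∃ v : A → ℂ, ρ = Matrix.vecMulVec v (star v)

def Matrix.PosSemidef.sqrt {n : Type*} [Fintype n] [DecidableEq n] {A : Matrix n n ℂ}
    (hA : A.PosSemidef) : Matrix n n ℂ :=
  (hA.1.eigenvectorUnitary : Matrix n n ℂ) *
    diagonal (fun i => ((Real.sqrt (hA.1.eigenvalues i) : ℝ) : ℂ)) *
    (star hA.1.eigenvectorUnitary : Matrix n n ℂ)

def traceNorm {A : Type*} [Fintype A] [DecidableEq A] (M : Matrix A A ℂ) : ℝ :=
  ((Matrix.posSemidef_conjTranspose_mul_self M).sqrt).trace.re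

def msqrt {A : Type*} [Fintype A] [DecidableEq A] (M : Matrix A A ℂ) : Matrix A A ℂ :=
  if h : M.PosSemidef then h.sqrt else 0

def fidelity {A : Type*} [Fintype A] [DecidableEq A] (ρ σ : Matrix A A ℂ) : ℝ :=
  traceNorm (msqrt ρ * msqrt σ)

def Bures {A : Type*} [Fintype A] [DecidableEq A] (ρ σ : Matrix A A ℂ) : ℝ :=
  Real.sqrt (1 - fidelity ρ σ)

def mUniform (A : Type*) [Fintype A] [DecidableEq A] : Matrix A A ℂ :=
  ((Fintype.card A : ℂ))⁻¹ • (1 : Matrix A A ℂ)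

def dmaxLE {A : Type*} [Fintype A] (ρ σ : Matrix A A ℂ) (c : ℝ) : Prop :=
  (((2:ℝ) ^ c) • σ - ρ).PosSemidef

def Dmax {A : Type*} [Fintype A] (ρ σ : Matrix A A ℂ) : ℝ :=
  sInf {c : ℝ | dmaxLE ρ σ c}

def ptraceRight {A B : Type*} [Fintype A] [Fintype B]
    (ρ : Matrix (A × B) (A × B) ℂ) : Matrix A A ℂ :=
  Matrix.of fun a a' => ∑ b, ρ (a, b) (a', b)

def ptraceLeft {A B : Type*} [Fintype A] [Fintype B]
    (ρ : Matrix (A × B) (A × B) ℂ) : Matrix B B ℂ :=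
  Matrix.of fun b b' => ∑ a, ρ (a, b) (a, b')

def condHmin {A B : Type*} [Fintype A] [Fintype B] [DecidableEq A] [DecidableEq B]
    (ρ : Matrix (A × B) (A × B) ℂ) : ℝ :=
  sSup {x : ℝ | ∃ σ : Matrix B B ℂ, IsDensity σ ∧ x = - Dmax ρ ((1 : Matrix A A ℂ) ⊗ₖ σ)}

def condHminTilde {A B : Type*} [Fintype A] [Fintype B] [DecidableEq A] [DecidableEq B]
    (ρ : Matrix (A × B) (A × B) ℂ) : ℝ :=
  - Dmax ρ ((1 : Matrix A A ℂ) ⊗ₖ ptraceLeft ρ)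

/-!
Tracing out `C` is cyclic in the operators acting on `C`, so writing `1 - M†M = S†S` gives
`tr_C ρ - tr_C τ = tr_C ((1 ⊗ S) ρ (1 ⊗ S)†) ≥ 0`, i.e. `ρ̂_AB ≤ p⁻¹ ρ_AB`. Then every
`ρ_AB ≤ 2^λ (1 ⊗ σ_B)` yields `ρ̂_AB ≤ 2^(λ + log (1/p)) (1 ⊗ σ_B)`, and optimising over `λ` and
`σ_B` gives the bound.
-/

section PartialTrace

variable {D C : Type*} [Fintype D] [Fintype C]

lemma ptraceRight_eq_sum_submatrix (X : Matrix (D × C) (D × C) ℂ) :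
    ptraceRight X = ∑ c, X.submatrix (·, c) (·, c) := by
  ext; simp [ptraceRight, Matrix.sum_apply]

lemma posSemidef_ptraceRight {X : Matrix (D × C) (D × C) ℂ} (hX : X.PosSemidef) :
    (ptraceRight X).PosSemidef := by
  rw [ptraceRight_eq_sum_submatrix]
  exact Matrix.posSemidef_sum _ fun c _ => hX.submatrix _

lemma trace_ptraceRight (X : Matrix (D × C) (D × C) ℂ) : (ptraceRight X).trace = X.trace := by
  simp [ptraceRight, Matrix.trace, Fintype.sum_prod_type]

lemma ptraceRight_add (X Y : Matrix (D × C) (D × C) ℂ) :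
    ptraceRight (X + Y) = ptraceRight X + ptraceRight Y := by
  ext; simp [ptraceRight, Finset.sum_add_distrib]

lemma ptraceRight_smul (r : ℝ) (X : Matrix (D × C) (D × C) ℂ) :
    ptraceRight (r • X) = r • ptraceRight X := by
  ext; simp [ptraceRight, Finset.smul_sum]

variable [DecidableEq D]

lemma ptraceRight_one_kronecker_mul (K : Matrix C C ℂ) (X : Matrix (D × C) (D × C) ℂ) :
    ptraceRight ((1 ⊗ₖ K) * X) = ptraceRight (X * (1 ⊗ₖ K)) := by
  ext d d'
  simp only [ptraceRight, Matrix.of_apply, Matrix.mul_apply, kroneckerMap_apply,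
    Matrix.one_apply, ite_mul, mul_ite, one_mul, zero_mul, mul_zero, Fintype.sum_prod_type,
    Finset.sum_ite_irrel, Finset.sum_const_zero, Finset.sum_ite_eq, Finset.sum_ite_eq',
    Finset.mem_univ, if_true]
  rw [Finset.sum_comm]
  simp_rw [mul_comm (K _ _)]

lemma ptraceRight_one_kronecker_conj (K K' : Matrix C C ℂ) (X : Matrix (D × C) (D × C) ℂ) :
    ptraceRight ((1 ⊗ₖ K) * X * (1 ⊗ₖ K')) = ptraceRight (X * (1 ⊗ₖ (K' * K))) := by
  rw [Matrix.mul_assoc, ptraceRight_one_kronecker_mul, Matrix.mul_assoc, ← mul_kronecker_mul,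
    Matrix.one_mul]

open scoped Matrix.Norms.L2Operator MatrixOrder in
lemma posSemidef_ptraceRight_sub_ptraceRight_conj [DecidableEq C]
    {X : Matrix (D × C) (D × C) ℂ} (hX : X.PosSemidef) {K : Matrix C C ℂ}
    (hK : (1 - Kᴴ * K).PosSemidef) :
    (ptraceRight X - ptraceRight ((1 ⊗ₖ K) * X * (1 ⊗ₖ Kᴴ))).PosSemidef := by
  obtain ⟨S, hS⟩ := CStarAlgebra.nonneg_iff_eq_star_mul_self.mp hK.nonneg
  rw [star_eq_conjTranspose] at hS
  have hdiff : ptraceRight X - ptraceRight ((1 ⊗ₖ K) * X * (1 ⊗ₖ Kᴴ))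
      = ptraceRight ((1 ⊗ₖ S) * X * (1 ⊗ₖ S)ᴴ) := by
    rw [conjTranspose_kronecker, conjTranspose_one, ptraceRight_one_kronecker_conj,
      ptraceRight_one_kronecker_conj, ← hS, sub_eq_iff_eq_add,
      ← ptraceRight_add, ← Matrix.mul_add, ← kronecker_add, sub_add_cancel, one_kronecker_one,
      Matrix.mul_one]
  rw [hdiff]
  exact posSemidef_ptraceRight (hX.mul_mul_conjTranspose_same _)

end PartialTrace

lemma IsDensity.nonempty {n : Type*} [Fintype n] {ρ : Matrix n n ℂ} (hρ : IsDensity ρ) :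
    Nonempty n := by
  by_contra h
  rw [not_nonempty_iff] at h
  simpa [Matrix.trace] using hρ.2

lemma IsDensity.ptraceRight {D C : Type*} [Fintype D] [Fintype C]
    {ρ : Matrix (D × C) (D × C) ℂ} (hρ : IsDensity ρ) : IsDensity (ptraceRight ρ) :=
  ⟨posSemidef_ptraceRight hρ.1, by rw [trace_ptraceRight, hρ.2]⟩

lemma isDensity_diagonal_single {n : Type*} [Fintype n] [DecidableEq n] (i : n) :
    IsDensity (diagonal (Pi.single i 1) : Matrix n n ℂ) := by
  refine ⟨Matrix.PosSemidef.diagonal fun j => ?_, by simp [trace_diagonal]⟩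
  rcases eq_or_ne j i with rfl | h <;> simp [*]

lemma one_le_of_posSemidef_smul_sub {n : Type*} [Fintype n] {ρ ρ' : Matrix n n ℂ} {t : ℝ}
    (hρ : IsDensity ρ) (hρ' : IsDensity ρ') (hle : (t • ρ - ρ').PosSemidef) : 1 ≤ t := by
  have h := hle.trace_nonneg
  rw [trace_sub, trace_smul, hρ.2, hρ'.2, Complex.real_smul, mul_one, ← Complex.ofReal_one,
    ← Complex.ofReal_sub, Complex.zero_le_real] at h
  linarith

section Dmax

variable {n : Type*} [Fintype n]

lemma dmaxLE_add_logb {ρ ρ' σ : Matrix n n ℂ} {c t : ℝ} (ht : 0 < t)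
    (hle : (t • ρ - ρ').PosSemidef) (h : dmaxLE ρ σ c) : dmaxLE ρ' σ (c + Real.logb 2 t) := by
  have hpow : (2 : ℝ) ^ (c + Real.logb 2 t) = t * 2 ^ c := by
    rw [Real.rpow_add two_pos, Real.rpow_logb two_pos (by norm_num) ht, mul_comm]
  have hsplit : (2 : ℝ) ^ (c + Real.logb 2 t) • σ - ρ'
      = t • ((2 : ℝ) ^ c • σ - ρ) + (t • ρ - ρ') := by
    rw [hpow, smul_sub, mul_smul]
    abel
  rw [dmaxLE, hsplit]
  exact (h.smul ht.le).add hle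

lemma Dmax_le_Dmax_add_logb {ρ ρ' σ : Matrix n n ℂ} {t : ℝ} (ht : 0 < t)
    (hle : (t • ρ - ρ').PosSemidef) (hfeas : {c | dmaxLE ρ σ c}.Nonempty)
    (hbdd : BddBelow {c | dmaxLE ρ' σ c}) : Dmax ρ' σ ≤ Dmax ρ σ + Real.logb 2 t := by
  rw [← sub_le_iff_le_add]
  exact le_csInf hfeas fun c hc =>
    sub_le_iff_le_add.mpr (csInf_le hbdd (dmaxLE_add_logb ht hle hc))

lemma dmaxLE.trace_le {ρ σ : Matrix n n ℂ} {c : ℝ} (h : dmaxLE ρ σ c) :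
    ρ.trace ≤ ((2 : ℝ) ^ c : ℝ) * σ.trace := by
  have := h.trace_nonneg
  rwa [trace_sub, trace_smul, Complex.real_smul, sub_nonneg] at this

open scoped Matrix.Norms.L2Operator MatrixOrder in
lemma exists_dmaxLE_one [DecidableEq n] {ρ : Matrix n n ℂ} (hρ : ρ.IsHermitian) :
    ∃ c, dmaxLE ρ 1 c := by
  have hnorm : (‖ρ‖ • (1 : Matrix n n ℂ) - ρ).PosSemidef := by
    simpa only [Matrix.le_iff, Algebra.algebraMap_eq_smul_one] using
      IsSelfAdjoint.le_algebraMap_norm_self (a := ρ) hρ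
  refine ⟨Real.logb 2 (‖ρ‖ + 1), ?_⟩
  rw [dmaxLE, Real.rpow_logb two_pos (by norm_num) (by positivity), add_smul, one_smul,
    add_sub_right_comm]
  exact hnorm.add Matrix.PosSemidef.one

end Dmax

section condHmin

variable {A B : Type*} [Fintype A] [Fintype B] [DecidableEq A]

lemma neg_logb_card_le_of_dmaxLE {ρ : Matrix (A × B) (A × B) ℂ} {σ : Matrix B B ℂ} {c : ℝ}
    (hρ : ρ.trace = 1) (hσ : σ.trace = 1) (h : dmaxLE ρ (1 ⊗ₖ σ) c) :
    -Real.logb 2 (Fintype.card A) ≤ c := by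
  have h1 : (1 : ℝ) ≤ 2 ^ c * Fintype.card A := by
    have := h.trace_le
    rwa [hρ, trace_kronecker, trace_one, hσ, mul_one, ← Complex.ofReal_natCast,
      ← Complex.ofReal_mul, ← Complex.ofReal_one, Complex.real_le_real] at this
  have hcard : (0 : ℝ) < Fintype.card A := by
    by_contra! h0
    nlinarith [Real.rpow_pos_of_pos two_pos c]
  rw [← Real.logb_inv, Real.logb_le_iff_le_rpow one_lt_two (inv_pos.2 hcard),
    inv_le_iff_one_le_mul₀ hcard]
  linarith

lemma neg_logb_card_le_Dmax {ρ : Matrix (A × B) (A × B) ℂ} {σ : Matrix B B ℂ}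
    (hρ : ρ.trace = 1) (hσ : σ.trace = 1) :
    -Real.logb 2 (Fintype.card A) ≤ Dmax ρ (1 ⊗ₖ σ) := by
  rcases Set.eq_empty_or_nonempty {c | dmaxLE ρ (1 ⊗ₖ σ) c} with hempty | hfeas
  · rw [Dmax, hempty, Real.sInf_empty, neg_nonpos, ← Real.log_div_log]
    exact div_nonneg (Real.log_natCast_nonneg _) (Real.log_nonneg one_le_two)
  · exact le_csInf hfeas fun c hc => neg_logb_card_le_of_dmaxLE hρ hσ hc

lemma bddAbove_condHmin {ρ : Matrix (A × B) (A × B) ℂ} (hρ : ρ.trace = 1) :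
    BddAbove {x : ℝ | ∃ σ : Matrix B B ℂ, IsDensity σ ∧ x = -Dmax ρ ((1 : Matrix A A ℂ) ⊗ₖ σ)} :=
  ⟨Real.logb 2 (Fintype.card A), by
    rintro _ ⟨σ, hσ, rfl⟩
    linarith [neg_logb_card_le_Dmax hρ hσ.2]⟩

variable [DecidableEq B]

lemma neg_Dmax_le_condHmin {ρ : Matrix (A × B) (A × B) ℂ} {σ : Matrix B B ℂ}
    (hρ : ρ.trace = 1) (hσ : IsDensity σ) : -Dmax ρ (1 ⊗ₖ σ) ≤ condHmin ρ :=
  le_csSup (bddAbove_condHmin hρ) ⟨σ, hσ, rfl⟩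

lemma exists_dmaxLE_of_subsingleton [Subsingleton B] {ρ : Matrix (A × B) (A × B) ℂ}
    {σ : Matrix B B ℂ} (hρ : ρ.IsHermitian) (hσ : σ.trace = 1) : ∃ c, dmaxLE ρ (1 ⊗ₖ σ) c := by
  have hσ1 : σ = 1 := by
    ext b b'
    obtain rfl := Subsingleton.elim b b'
    rw [one_apply_eq, ← hσ, Matrix.trace, Fintype.sum_subsingleton _ b, diag_apply]
  rw [hσ1, one_kronecker_one]
  exact exists_dmaxLE_one hρ

lemma condHmin_nonneg (hB : 1 < Fintype.card B) {ρ : Matrix (A × B) (A × B) ℂ}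
    (hρ : IsDensity ρ) : 0 ≤ condHmin ρ := by
  obtain ⟨⟨a, b⟩, hab⟩ : ∃ w, ρ w w ≠ 0 := by
    by_contra! h
    simpa [Matrix.trace, h] using hρ.2
  obtain ⟨b', hb'⟩ := Fintype.exists_ne_of_one_lt_card hB b
  have hempty : {c | dmaxLE ρ ((1 : Matrix A A ℂ) ⊗ₖ diagonal (Pi.single b' 1)) c} = ∅ := by
    refine Set.eq_empty_of_forall_notMem fun c hc => hab (le_antisymm ?_ hρ.1.diag_nonneg)
    simpa [hb'.symm] using hc.diag_nonneg (i := (a, b))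
  have := neg_Dmax_le_condHmin hρ.2 (isDensity_diagonal_single b')
  rwa [Dmax, hempty, Real.sInf_empty, neg_zero] at this

theorem condHmin_le_condHmin_add_logb {ρ ρ' : Matrix (A × B) (A × B) ℂ} {t : ℝ}
    (hρ : IsDensity ρ) (hρ' : IsDensity ρ') (ht : 0 < t) (hle : (t • ρ - ρ').PosSemidef) :
    condHmin ρ ≤ condHmin ρ' + Real.logb 2 t := by
  have hB : Nonempty B := hρ.nonempty.map Prod.snd
  have hlogt : 0 ≤ Real.logb 2 t :=
    Real.logb_nonneg one_lt_two (one_le_of_posSemidef_smul_sub hρ hρ' hle)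
  refine csSup_le ⟨_, _, isDensity_diagonal_single hB.some, rfl⟩ ?_
  rintro _ ⟨σ, hσ, rfl⟩
  rcases Set.eq_empty_or_nonempty {c | dmaxLE ρ (1 ⊗ₖ σ) c} with hempty | hfeas
  · -- `Dmax` is the junk value `0` here; this forces `1 < card B`, and then `condHmin ρ' ≥ 0`.
    have hcard : 1 < Fintype.card B := by
      by_contra! h
      have := Fintype.card_le_one_iff_subsingleton.mp h
      obtain ⟨c, hc⟩ := exists_dmaxLE_of_subsingleton hρ.1.isHermitian hσ.2
      exact hempty.subset hc
    rw [Dmax, hempty, Real.sInf_empty, neg_zero]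
    linarith [condHmin_nonneg hcard hρ']
  · have hbdd : BddBelow {c | dmaxLE ρ' (1 ⊗ₖ σ) c} :=
      ⟨_, fun c hc => neg_logb_card_le_of_dmaxLE hρ'.2 hσ.2 hc⟩
    linarith [Dmax_le_Dmax_add_logb ht hle hfeas hbdd, neg_Dmax_le_condHmin hρ'.2 hσ]

end condHmin

/-- Conditioning on a measurement (Kraus operator `M` on `C` with
`M†M ≤ Id`) of success probability `p` decreases `H_min(A|B)` by at most `log(1/p)`. -/
theorem hmin_decrease_under_measurement {A B C : Type*} [Fintype A] [Fintype B] [Fintype C]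
    [DecidableEq A] [DecidableEq B] [DecidableEq C]
    (ρ : Matrix ((A × B) × C) ((A × B) × C) ℂ) (hρ : IsDensity ρ)
    (M : Matrix C C ℂ) (hM : ((1 : Matrix C C ℂ) - Mᴴ * M).PosSemidef)
    (p : ℝ) (hp : 0 < p)
    (τ : Matrix ((A × B) × C) ((A × B) × C) ℂ)
    (hτ : τ = ((1 : Matrix (A × B) (A × B) ℂ) ⊗ₖ M) * ρ *
      ((1 : Matrix (A × B) (A × B) ℂ) ⊗ₖ Mᴴ))
    (hptr : τ.trace = (p : ℂ)) :
    condHmin (ptraceRight (p⁻¹ • τ)) ≥ condHmin (ptraceRight ρ) - Real.logb 2 (1 / p) := by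
  have hτ_psd : τ.PosSemidef := by
    rw [hτ, ← conjTranspose_one, ← conjTranspose_kronecker, conjTranspose_one]
    exact hρ.1.mul_mul_conjTranspose_same _
  have hτ_density : IsDensity (p⁻¹ • τ) := by
    refine ⟨hτ_psd.smul (inv_nonneg.2 hp.le), ?_⟩
    rw [trace_smul, hptr, Complex.real_smul, Complex.ofReal_inv, inv_mul_cancel₀]
    exact_mod_cast hp.ne'
  have hle : (p⁻¹ • ptraceRight ρ - ptraceRight (p⁻¹ • τ)).PosSemidef := by
    rw [ptraceRight_smul, ← smul_sub, hτ]
    exact (posSemidef_ptraceRight_sub_ptraceRight_conj hρ.1 hM).smul (inv_nonneg.2 hp.le)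
  rw [ge_iff_le, sub_le_iff_le_add, one_div]
  exact condHmin_le_condHmin_add_logb hρ.ptraceRight hτ_density.ptraceRight (inv_pos.2 hp) hle
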